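/- Let N be the monomial ideal generated by all β_A for (m−1)-element subsets A ⊆ {2,…,n}. Then for every s ≥ 1, N^s is generated by the products ∏_{k=1}^s β_{A_k} taken over chains A₁ ≤ A₂ ≤ … ≤ A_s of (m−1)-element subsets of {2,…,n}. -/

import Mathlib

open MvPolynomial Finset

/-- The set `V = {(i,j) ∈ [m]×[n] : m−i < j ≤ n−i+1}` (1-based indices). -/
def Vset (m n : ℕ) : Finset (ℕ × ℕ) :=
  ((Finset.Icc 1 m) ×ˢ (Finset.Icc 1 n)).filter
    (fun p => m - p.1 < p.2 ∧ p.2 ≤ n - p.1 + 1)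

/-- `a : ℕ → ℕ` represents an `(m−1)`-element subset `A = {a 1 < … < a (m−1)} ⊆ {2,…,n}`,
together with the conventions `a 0 = 1` and `a m = n + 1`. -/
def SubsetRep (m n : ℕ) (a : ℕ → ℕ) : Prop :=
  a 0 = 1 ∧ a m = n + 1 ∧ ∀ i < m, a i < a (i + 1)

/-- The region `D_A = {(i,j) ∈ V : a_{m−i} ≤ j < a_{m−i+1}}`. -/
def Dset (m n : ℕ) (a : ℕ → ℕ) : Finset (ℕ × ℕ) :=
  (Vset m n).filter (fun p => a (m - p.1) ≤ p.2 ∧ p.2 < a (m - p.1 + 1))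

variable (K : Type*) [Field K]

/-- The squarefree monomial `β_A = ∏_{(i,j) ∈ V ∖ D_A} x_{i,j}`. -/
noncomputable def betaM (m n : ℕ) (a : ℕ → ℕ) : MvPolynomial (ℕ × ℕ) K :=
  ∏ p ∈ Vset m n \ Dset m n a, X p

/-- The antidiagonal monomial `α_j = ∏_{i=1}^m x_{m−i+1, j+i−1}`. -/
noncomputable def alphaM (m : ℕ) (j : ℕ) : MvPolynomial (ℕ × ℕ) K :=
  ∏ i ∈ Finset.Icc 1 m, X (m - i + 1, j + i - 1)

/-- The ideal `N` generated by the monomials `β_A` for all `(m−1)`-element subsets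
`A ⊆ {2,…,n}`. -/
noncomputable def Nideal (m n : ℕ) : Ideal (MvPolynomial (ℕ × ℕ) K) :=
  Ideal.span { f | ∃ a : ℕ → ℕ, SubsetRep m n a ∧ f = betaM K m n a }

/-- `A k`, `1 ≤ k ≤ s`, is a chain `A₁ ≤ … ≤ A_s` of `(m−1)`-element subsets of `{2,…,n}`,
where `≤` is the componentwise partial order. -/
def BetaChain (m n s : ℕ) (A : ℕ → ℕ → ℕ) : Prop :=
  (∀ k, 1 ≤ k → k ≤ s → SubsetRep m n (A k)) ∧
    (∀ k, 1 ≤ k → k + 1 ≤ s → ∀ i ≤ m, A k i ≤ A (k + 1) i)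

/-- `W^{[2]}` : the ideal generated by the squares of all the monomials in `W`. -/
noncomputable def bracketTwo {σ : Type*} (W : Ideal (MvPolynomial σ K)) :
    Ideal (MvPolynomial σ K) :=
  Ideal.span { g | ∃ d : σ →₀ ℕ, (monomial d (1 : K)) ∈ W ∧ g = (monomial d (1 : K)) ^ 2 }

/-- The symbolic power `I^{(n)} = ⋂_{p ∈ Min(I)} (pⁿ R_p ∩ R)`. -/
noncomputable def symbolicPower {R : Type*} [CommRing R] (I : Ideal R) (n : ℕ) : Ideal R :=
  ⨅ p : {q : Ideal R // q ∈ I.minimalPrimes},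
    letI : p.1.IsPrime := p.2.1.1
    ((p.1 ^ n).map (algebraMap R (Localization.AtPrime p.1))).comap
      (algebraMap R (Localization.AtPrime p.1))

/-!
The straightening law `β_A β_B = β_{A ⊓ B} β_{A ⊔ B}` holds variable by variable: for
`x_{i,j}` with `k = m - i`, the exponent on each side counts how many of the two intervals
`[a k, a (k+1))`, `[b k, b (k+1))` miss `j`, and replacing both pairs of endpoints by their
minima and their maxima does not change that count. Hence a new factor `β_B` can be inserted
into a chain `A₁ ≤ ⋯ ≤ A_s` by `β_B β_{A₁} ⋯ = β_{B ⊓ A₁} (β_{B ⊔ A₁} β_{A₂} ⋯)` and recursion,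
and the resulting list is again a chain; by induction on `s` every product of `s` generators
of `N` is a product along a chain.
-/

section ChainInsert

variable {α : Type*} [Lattice α]

def chainInsert (b : α) : List α → List α
  | [] => [b]
  | a :: l => (b ⊓ a) :: chainInsert (b ⊔ a) l

theorem length_chainInsert (b : α) (l : List α) :
    (chainInsert b l).length = l.length + 1 := by
  induction l generalizing b with
  | nil => rfl
  | cons a l ih => simp [chainInsert, ih]

theorem isChain_cons_chainInsert {c b : α} {l : List α} (hcb : c ≤ b)
    (hl : (c :: l).IsChain (· ≤ ·)) : (c :: chainInsert b l).IsChain (· ≤ ·) := by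
  induction l generalizing b c with
  | nil => simpa [chainInsert] using hcb
  | cons a l ih =>
    rw [List.isChain_cons_cons] at hl
    exact List.isChain_cons_cons.mpr ⟨le_inf hcb hl.1,
      ih inf_le_sup (hl.2.imp_head fun h => inf_le_right.trans h)⟩

theorem isChain_chainInsert (b : α) {l : List α} (hl : l.IsChain (· ≤ ·)) :
    (chainInsert b l).IsChain (· ≤ ·) := by
  cases l with
  | nil => exact .singleton b
  | cons a l =>
    exact isChain_cons_chainInsert inf_le_sup (hl.imp_head fun h => inf_le_right.trans h)

theorem prod_map_chainInsert {M : Type*} [CommMonoid M] {f : α → M}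
    (hf : ∀ a b, f a * f b = f (a ⊓ b) * f (a ⊔ b)) (b : α) (l : List α) :
    ((chainInsert b l).map f).prod = f b * (l.map f).prod := by
  induction l generalizing b with
  | nil => simp [chainInsert]
  | cons a l ih =>
    simp only [chainInsert, List.map_cons, List.prod_cons, ih, ← mul_assoc, ← hf b a]

end ChainInsert

theorem List.prod_Icc_getD {M : Type*} [CommMonoid M] (l : List M) (d : M) :
    ∏ k ∈ Finset.Icc 1 l.length, l.getD (k - 1) d = l.prod := by
  rw [← Finset.Ico_add_one_right_eq_Icc, Finset.prod_Ico_eq_prod_range, Nat.add_sub_cancel,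
    Finset.prod_range, ← Fin.prod_univ_getElem]
  refine Finset.prod_congr rfl fun i _ => ?_
  simp

def subsetRepSublattice (m n : ℕ) : Sublattice (ℕ → ℕ) where
  carrier := {a | SubsetRep m n a}
  supClosed' := by
    rintro a ⟨ha0, ham, ha⟩ b ⟨hb0, hbm, hb⟩
    refine ⟨by simp [ha0, hb0], by simp [ham, hbm], fun i hi => ?_⟩
    have := ha i hi
    have := hb i hi
    simp only [Pi.sup_apply]
    omega
  infClosed' := by
    rintro a ⟨ha0, ham, ha⟩ b ⟨hb0, hbm, hb⟩
    refine ⟨by simp [ha0, hb0], by simp [ham, hbm], fun i hi => ?_⟩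
    have := ha i hi
    have := hb i hi
    simp only [Pi.inf_apply]
    omega

theorem betaM_eq_prod_ite (m n : ℕ) (a : ℕ → ℕ) :
    betaM K m n a = ∏ p ∈ Vset m n,
      if a (m - p.1) ≤ p.2 ∧ p.2 < a (m - p.1 + 1) then 1 else X p := by
  rw [betaM, Dset, ← Finset.filter_not, Finset.prod_filter]
  exact Finset.prod_congr rfl fun p _ => by split_ifs <;> simp_all

theorem betaM_mul_betaM {m n : ℕ} {a b : ℕ → ℕ} (ha : SubsetRep m n a)
    (hb : SubsetRep m n b) :
    betaM K m n a * betaM K m n b = betaM K m n (a ⊓ b) * betaM K m n (a ⊔ b) := by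
  simp only [betaM_eq_prod_ite, ← Finset.prod_mul_distrib, Pi.inf_apply, Pi.sup_apply]
  refine Finset.prod_congr rfl fun p hp => ?_
  have hp1 : 1 ≤ p.1 ∧ p.1 ≤ m := by
    simp only [Vset, Finset.mem_filter, Finset.mem_product, Finset.mem_Icc] at hp
    exact hp.1.1
  have := ha.2.2 (m - p.1) (by omega)
  have := hb.2.2 (m - p.1) (by omega)
  split_ifs <;> first | ring1 | (exfalso; omega)

theorem prod_betaM_mem_Nideal_pow {m n s : ℕ} {A : ℕ → ℕ → ℕ} (hA : BetaChain m n s A) :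
    ∏ k ∈ Finset.Icc 1 s, betaM K m n (A k) ∈ Nideal K m n ^ s := by
  have := Ideal.prod_mem_prod (I := fun _ => Nideal K m n) fun k hk =>
    Ideal.subset_span ⟨A k, hA.1 k (mem_Icc.1 hk).1 (mem_Icc.1 hk).2, rfl⟩
  simpa using this

theorem Nideal_pow_le_span_chains (m n s : ℕ) :
    Nideal K m n ^ s ≤ Ideal.span {g | ∃ l : List (subsetRepSublattice m n),
      l.length = s ∧ l.IsChain (· ≤ ·) ∧ g = (l.map fun a => betaM K m n a.1).prod} := by
  induction s with
  | zero =>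
    rw [pow_zero, Ideal.one_eq_top, top_le_iff, Ideal.eq_top_iff_one]
    exact Ideal.subset_span ⟨[], rfl, .nil, List.prod_nil.symm⟩
  | succ s ih =>
    rw [pow_succ', Nideal]
    refine (Ideal.mul_mono_right ih).trans ?_
    rw [Ideal.span_mul_span']
    refine Ideal.span_mono ?_
    rintro _ ⟨_, ⟨a, ha, rfl⟩, _, ⟨l, rfl, hl, rfl⟩, rfl⟩
    refine ⟨chainInsert ⟨a, ha⟩ l, length_chainInsert _ _, isChain_chainInsert _ hl, ?_⟩
    exact (prod_map_chainInsert (f := fun a : subsetRepSublattice m n => betaM K m n a)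
      (fun a b => betaM_mul_betaM K a.2 b.2) ⟨a, ha⟩ l).symm

theorem exists_betaChain_prod_eq {m n : ℕ} {l : List (subsetRepSublattice m n)}
    (hl : l.IsChain (· ≤ ·)) :
    ∃ A : ℕ → ℕ → ℕ, BetaChain m n l.length A ∧
      (l.map fun a => betaM K m n a.1).prod =
        ∏ k ∈ Finset.Icc 1 l.length, betaM K m n (A k) := by
  refine ⟨fun k => (l.map Subtype.val).getD (k - 1) 0,
    ⟨fun k h1 h2 => ?_, fun k h1 h2 i _ => ?_⟩, ?_⟩
  · beta_reduce
    rw [List.getD_eq_getElem _ _ (by simp; omega), List.getElem_map]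
    exact (l[k - 1]).2
  · have := hl.getElem (k - 1) (by omega)
    beta_reduce
    rw [List.getD_eq_getElem _ _ (by simp; omega), List.getD_eq_getElem _ _ (by simp; omega),
      List.getElem_map, List.getElem_map]
    simpa [show k - 1 + 1 = k + 1 - 1 by omega] using this i
  · rw [show (l.map fun a => betaM K m n a.1) = (l.map Subtype.val).map (betaM K m n) by
        rw [List.map_map]; rfl, ← List.prod_Icc_getD _ (betaM K m n 0), List.length_map,
      List.length_map]
    simp only [List.getD_map]

theorem stmt_6 (m n : ℕ) (s : ℕ) :
    Nideal K m n ^ s =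
      Ideal.span { g | ∃ A : ℕ → ℕ → ℕ, BetaChain m n s A ∧
        g = ∏ k ∈ Finset.Icc 1 s, betaM K m n (A k) } := by
  refine le_antisymm ((Nideal_pow_le_span_chains K m n s).trans (Ideal.span_mono ?_))
    (Ideal.span_le.mpr ?_)
  · rintro _ ⟨l, rfl, hl, rfl⟩
    exact exists_betaChain_prod_eq K hl
  · rintro _ ⟨A, hA, rfl⟩
    exact prod_betaM_mem_Nideal_pow K hA
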